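/- Under the assumptions of Theorem 1 (big-M bound L on all pre-activations for all binary inputs), the optimal value of max over feasible allocations a ∈ F of Σ_i N_i(a_i) (where each N_i is a ReLU network and F = {a ∈ ({0,1}^m)^n : Σ_i a_{ij} ≤ 1 ∀j}) equals the optimal value of the MIP maximizing Σ_i z^{i,K_i} subject to z^{i,0} = a_i, the layer-wise big-M constraints for each bidder i and layer k, binarity of a and y, and the feasibility constraints Σ_i a_{ij} ≤ 1. -/

import Mathlib

/-- Layer dimensions of a bidder's network: the input layer has `m` nodes. -/
def dims (m : ℕ) (d : ℕ → ℕ) : ℕ → ℕ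
  | 0 => m
  | k + 1 => d (k + 1)

/-- Output of layer `k` of a ReLU network (`layerOut ... 0 = x` is the input). -/
noncomputable def layerOut (d : ℕ → ℕ)
    (W : (k : ℕ) → Matrix (Fin (d (k + 1))) (Fin (d k)) ℝ)
    (b : (k : ℕ) → Fin (d (k + 1)) → ℝ) (x : Fin (d 0) → ℝ) :
    (k : ℕ) → Fin (d k) → ℝ
  | 0 => x
  | k + 1 => fun j => max 0 (((W k).mulVec (layerOut d W b x k) + b k) j)

/-! Once `L` bounds the pre-activation `p` of a ReLU unit, its big-M constraints are exact:
the binary `y` forces either the output `z` or the slack `s` to vanish, so `z - s = p` pins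
`z = max 0 p`, while `(max 0 p, max 0 (-p), [0 ≤ p])` is always a feasible choice. Layer by
layer, the feasible points of the MIP are thus exactly the network evaluations on feasible
allocations, and both problems have the same set of objective values. -/

/-- Big-M constraints of a ReLU unit with pre-activation `p`, output `z`, slack `s` and
indicator `y`. -/
def IsBigMReLU {α : Type*} [CommRing α] [LinearOrder α] (L p z s y : α) : Prop :=
  (y = 0 ∨ y = 1) ∧ z - s = p ∧ (0 ≤ z ∧ z ≤ y * L) ∧ (0 ≤ s ∧ s ≤ (1 - y) * L)

section Unit

variable {α : Type*} [CommRing α] [LinearOrder α] [IsStrictOrderedRing α] {L p z s y : α}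

theorem IsBigMReLU.eq_max_zero (h : IsBigMReLU L p z s y) : z = max 0 p := by
  obtain ⟨hy | hy, hzs, ⟨hz, hzL⟩, ⟨hs, hsL⟩⟩ := h <;> subst hy
  · have hz0 : z = 0 := le_antisymm (by simpa using hzL) hz
    rw [hz0, max_eq_left (by linarith)]
  · have hs0 : s = 0 := le_antisymm (by simpa using hsL) hs
    rw [max_eq_right (by linarith)]
    linarith

theorem isBigMReLU_max_zero (hp : |p| ≤ L) :
    IsBigMReLU L p (max 0 p) (max 0 (-p)) (if 0 ≤ p then 1 else 0) := by
  obtain ⟨hLp, hpL⟩ := abs_le.mp hp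
  refine ⟨by split_ifs <;> simp, by rw [max_comm, max_comm 0]; exact max_zero_sub_eq_self p,
    ⟨le_max_left _ _, ?_⟩, ⟨le_max_left _ _, ?_⟩⟩ <;> split_ifs with h
  · simpa using max_le (by linarith) hpL
  · simpa using (max_eq_left (not_le.mp h).le).le
  · simpa using (max_eq_left (by linarith : -p ≤ 0)).le
  · simpa using max_le (by linarith : (0 : α) ≤ L) (by linarith : -p ≤ L)

end Unit

section Network

variable (d : ℕ → ℕ) (W : (k : ℕ) → Matrix (Fin (d (k + 1))) (Fin (d k)) ℝ)
  (b : (k : ℕ) → Fin (d (k + 1)) → ℝ) (L : ℝ) (K : ℕ)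

theorem layerOut_eq_of_isBigMReLU (x : Fin (d 0) → ℝ) (z s y : (k : ℕ) → Fin (d k) → ℝ)
    (hz₀ : z 0 = x)
    (hz : ∀ k < K, ∀ j,
      IsBigMReLU L (((W k).mulVec (z k) + b k) j) (z (k + 1) j) (s (k + 1) j) (y (k + 1) j)) :
    ∀ k ≤ K, z k = layerOut d W b x k := by
  intro k hk
  induction k with
  | zero => exact hz₀
  | succ k ih =>
    funext j
    rw [(hz k hk j).eq_max_zero, ih (by omega)]
    rfl

theorem exists_isBigMReLU_layerOut (x : Fin (d 0) → ℝ)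
    (hL : ∀ k < K, ∀ j, |((W k).mulVec (layerOut d W b x k) + b k) j| ≤ L) :
    ∃ s y : (k : ℕ) → Fin (d k) → ℝ, ∀ k < K, ∀ j,
      IsBigMReLU L (((W k).mulVec (layerOut d W b x k) + b k) j)
        (layerOut d W b x (k + 1) j) (s (k + 1) j) (y (k + 1) j) :=
  ⟨fun | 0 => 0 | k + 1 => fun j => max 0 (-((W k).mulVec (layerOut d W b x k) + b k) j),
    fun | 0 => 0 | k + 1 => fun j =>
      if 0 ≤ ((W k).mulVec (layerOut d W b x k) + b k) j then 1 else 0,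
    fun k hk j => isBigMReLU_max_zero (hL k hk j)⟩

end Network

theorem dnn_wdp_mip_equivalence (n m : ℕ) (K : Fin n → ℕ)
    (d : Fin n → ℕ → ℕ)
    (W : (i : Fin n) → (k : ℕ) →
      Matrix (Fin (dims m (d i) (k + 1))) (Fin (dims m (d i) k)) ℝ)
    (b : (i : Fin n) → (k : ℕ) → Fin (dims m (d i) (k + 1)) → ℝ)
    (L : ℝ)
    (hL : ∀ i : Fin n, ∀ x : Fin m → ℝ, (∀ j, x j = 0 ∨ x j = 1) →
      ∀ k < K i, ∀ j,
        |((W i k).mulVec (layerOut (dims m (d i)) (W i) (b i) x k) + b i k) j| ≤ L) :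
    sSup {r : ℝ | ∃ a : Fin n → Fin m → ℝ,
        (∀ i j, a i j = 0 ∨ a i j = 1) ∧
        (∀ j, ∑ i, a i j ≤ 1) ∧
        r = ∑ i, ∑ j, layerOut (dims m (d i)) (W i) (b i) (a i) (K i) j} =
    sSup {r : ℝ | ∃ (a : Fin n → Fin m → ℝ)
        (z s y : (i : Fin n) → (k : ℕ) → Fin (dims m (d i) k) → ℝ),
        (∀ i j, a i j = 0 ∨ a i j = 1) ∧
        (∀ j, ∑ i, a i j ≤ 1) ∧
        (∀ i, z i 0 = a i) ∧
        (∀ i, ∀ k < K i, ∀ j, y i (k + 1) j = 0 ∨ y i (k + 1) j = 1) ∧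
        (∀ i, ∀ k < K i, ∀ j, z i (k + 1) j - s i (k + 1) j =
            ((W i k).mulVec (z i k) + b i k) j) ∧
        (∀ i, ∀ k < K i, ∀ j,
            0 ≤ z i (k + 1) j ∧ z i (k + 1) j ≤ y i (k + 1) j * L) ∧
        (∀ i, ∀ k < K i, ∀ j,
            0 ≤ s i (k + 1) j ∧ s i (k + 1) j ≤ (1 - y i (k + 1) j) * L) ∧
        r = ∑ i, ∑ j, z i (K i) j} := by
  congr 1
  ext r
  constructor
  · rintro ⟨a, ha, hfeas, rfl⟩
    choose s y hsy using fun i =>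
      exists_isBigMReLU_layerOut _ (W i) (b i) L (K i) (a i) (hL i (a i) (ha i))
    exact ⟨a, fun i => layerOut _ (W i) (b i) (a i), s, y, ha, hfeas, fun i => rfl,
      fun i k hk j => (hsy i k hk j).1, fun i k hk j => (hsy i k hk j).2.1,
      fun i k hk j => (hsy i k hk j).2.2.1, fun i k hk j => (hsy i k hk j).2.2.2, rfl⟩
  · rintro ⟨a, z, s, y, ha, hfeas, hz₀, hy, hzs, hz, hs, rfl⟩
    refine ⟨a, ha, hfeas, Finset.sum_congr rfl fun i _ => ?_⟩
    rw [layerOut_eq_of_isBigMReLU _ (W i) (b i) L (K i) (a i) (z i) (s i) (y i) (hz₀ i)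
      (fun k hk j => ⟨hy i k hk j, hzs i k hk j, hz i k hk j, hs i k hk j⟩) (K i) le_rfl]
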